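/- Let M, N be positive integers, let P > 0 be a real number, and let (H_k)_{k≥1} be an i.i.d. sequence of random N×M complex matrices on a probability space, where H_1 has standardized independent entries. Then almost surely, as K → ∞, log det(I_M + (P/M) Σ_{k=1}^K H_k* H_k) − M·log K converges to M·log(PN/M). (This is the asymptotic broadcast-cut bound underlying the capacity scaling law of the two-way relay channel.) -/

import Mathlib

/-!
By the strong law of large numbers, applied entrywise to the i.i.d. Gram matrices `Hₖᴴ Hₖ`,
`K⁻¹ ∑_{k<K} Hₖᴴ Hₖ → 𝔼[H₀ᴴ H₀]` almost surely, and independence, zero mean and unit variance of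
the entries make this expectation `N • 1`. Hence `K⁻¹ (1 + (P/M) ∑_{k<K} Hₖᴴ Hₖ) → (P N / M) • 1`;
since `det (K⁻¹ A) = K⁻ᴹ det A` and `det` is continuous, `det A / Kᴹ → (P N / M)ᴹ > 0`, and taking
logarithms gives the limit.
-/

open MeasureTheory ProbabilityTheory Matrix Filter

instance matrixMeasurableSpace {m n α : Type*} [MeasurableSpace α] :
    MeasurableSpace (Matrix m n α) :=
  inferInstanceAs (MeasurableSpace (m → n → α))

open Topology

lemma Real.tendsto_log_sub_mul_log_of_tendsto_div_pow {f : ℕ → ℝ} {d : ℕ} {a : ℝ} (ha : 0 < a)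
    (hf : Tendsto (fun K : ℕ => f K / (K : ℝ) ^ d) atTop (𝓝 a)) :
    Tendsto (fun K : ℕ => Real.log (f K) - d * Real.log K) atTop (𝓝 (Real.log a)) := by
  refine ((Real.continuousAt_log ha.ne').tendsto.comp hf).congr' ?_
  filter_upwards [hf.eventually (eventually_gt_nhds ha), eventually_ge_atTop 1] with K hpos hK
  have hK0 : (K : ℝ) ^ d ≠ 0 := pow_ne_zero _ (by positivity)
  have hfK : f K ≠ 0 := fun h => by simp [h] at hpos
  simp only [Function.comp_apply, Real.log_div hfK hK0, Real.log_pow]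

section Deterministic

variable {n : Type*} [DecidableEq n]

lemma Matrix.tendsto_inv_smul_one_add_smul {S : ℕ → Matrix n n ℂ} {c : ℝ} {L : ℂ}
    (hS : Tendsto (fun K : ℕ => (K : ℝ)⁻¹ • S K) atTop (𝓝 (L • 1))) :
    Tendsto (fun K : ℕ => (K : ℝ)⁻¹ • (1 + (c : ℂ) • S K)) atTop (𝓝 (((c : ℂ) * L) • 1)) := by
  have h1 : Tendsto (fun K : ℕ => (K : ℝ)⁻¹ • (1 : Matrix n n ℂ)) atTop (𝓝 0) := by
    simpa using (tendsto_inv_atTop_nhds_zero_nat (𝕜 := ℝ)).smul_const (1 : Matrix n n ℂ)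
  convert h1.add (hS.const_smul (c : ℂ)) using 1
  · ext1 K
    rw [smul_add, smul_comm]
  · rw [zero_add, smul_smul]

lemma Matrix.tendsto_re_det_one_add_smul_div_pow [Fintype n] {S : ℕ → Matrix n n ℂ} {c L : ℝ}
    (hS : Tendsto (fun K : ℕ => (K : ℝ)⁻¹ • S K) atTop (𝓝 ((L : ℂ) • 1))) :
    Tendsto (fun K : ℕ => (1 + (c : ℂ) • S K).det.re / (K : ℝ) ^ Fintype.card n) atTop
      (𝓝 ((c * L) ^ Fintype.card n)) := by
  have hdet := ((continuous_id.matrix_det.tendsto _).comp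
    (tendsto_inv_smul_one_add_smul (c := c) hS))
  have hre := (Complex.continuous_re.tendsto _).comp hdet
  convert hre using 1
  · ext1 K
    rw [Function.comp_apply, Function.comp_apply, id, det_smul_of_tower, Complex.smul_re,
      smul_eq_mul, inv_pow, div_eq_inv_mul]
  · rw [id, det_smul, det_one, mul_one, ← Complex.ofReal_mul, ← Complex.ofReal_pow,
      Complex.ofReal_re]

theorem Matrix.tendsto_log_re_det_one_add_smul_sub [Fintype n] {S : ℕ → Matrix n n ℂ} {c L : ℝ}
    (hcL : 0 < c * L)
    (hS : Tendsto (fun K : ℕ => (K : ℝ)⁻¹ • S K) atTop (𝓝 ((L : ℂ) • 1))) :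
    Tendsto (fun K : ℕ => Real.log (1 + (c : ℂ) • S K).det.re - Fintype.card n * Real.log K)
      atTop (𝓝 (Fintype.card n * Real.log (c * L))) := by
  rw [← Real.log_pow]
  exact Real.tendsto_log_sub_mul_log_of_tendsto_div_pow (pow_pos hcL _)
    (tendsto_re_det_one_add_smul_div_pow hS)

end Deterministic

section Gram

variable {Ω m n : Type*} [MeasurableSpace Ω] {μ : Measure Ω}

lemma integral_star_mul_self (f : Ω → ℂ) :
    ∫ ω, star (f ω) * f ω ∂μ = ((∫ ω, ‖f ω‖ ^ 2 ∂μ : ℝ) : ℂ) := by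
  simp_rw [Complex.star_def, Complex.conj_mul', ← Complex.ofReal_pow, integral_complex_ofReal]

lemma ProbabilityTheory.IndepFun.integral_star_mul_eq_zero {f g : Ω → ℂ} (hfg : IndepFun f g μ)
    (hf : AEStronglyMeasurable f μ) (hg : AEStronglyMeasurable g μ) (hf0 : ∫ ω, f ω ∂μ = 0) :
    ∫ ω, star (f ω) * g ω ∂μ = 0 := by
  have hfg' : IndepFun (fun ω => star (f ω)) g μ :=
    hfg.comp continuous_star.measurable measurable_id
  rw [hfg'.integral_fun_mul_eq_mul_integral hf.star hg]
  simp [integral_conj, hf0]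

variable [Fintype m] {X : Ω → Matrix m n ℂ}

lemma Matrix.conjTranspose_mul_self_apply (A : Matrix m n ℂ) (i j : n) :
    (Aᴴ * A) i j = ∑ k, star (A k i) * A k j := by
  simp [mul_apply]

lemma integrable_conjTranspose_mul_self_apply (hL2 : ∀ k i, MemLp (fun ω => X ω k i) 2 μ)
    (i j : n) : Integrable (fun ω => ((X ω)ᴴ * X ω) i j) μ := by
  simp only [conjTranspose_mul_self_apply]
  exact integrable_finsetSum _ fun k _ => (hL2 k i).star.integrable_mul (hL2 k j)

lemma integral_conjTranspose_mul_self_apply [DecidableEq n]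
    (hindep : iIndepFun (fun (p : m × n) (ω : Ω) => X ω p.1 p.2) μ)
    (hL2 : ∀ k i, MemLp (fun ω => X ω k i) 2 μ)
    (hmean : ∀ k i, ∫ ω, X ω k i ∂μ = 0)
    (hvar : ∀ k i, ∫ ω, ‖X ω k i‖ ^ 2 ∂μ = 1) (i j : n) :
    ∫ ω, ((X ω)ᴴ * X ω) i j ∂μ = ((Fintype.card m : ℂ) • (1 : Matrix n n ℂ)) i j := by
  have hint (k : m) : Integrable (fun ω => star (X ω k i) * X ω k j) μ :=
    (hL2 k i).star.integrable_mul (hL2 k j)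
  simp only [conjTranspose_mul_self_apply]
  rw [integral_finsetSum _ fun k _ => hint k]
  rcases eq_or_ne i j with rfl | hij
  · have hnorm (k : m) : ∫ ω, star (X ω k i) * X ω k i ∂μ = 1 := by
      rw [integral_star_mul_self (fun ω => X ω k i), hvar, Complex.ofReal_one]
    rw [Finset.sum_congr rfl fun k _ => hnorm k]
    simp
  · have hcross (k : m) : ∫ ω, star (X ω k i) * X ω k j ∂μ = 0 :=
      (hindep.indepFun (by simp [hij] : ((k, i) : m × n) ≠ (k, j))).integral_star_mul_eq_zero
        (hL2 k i).1 (hL2 k j).1 (hmean k i)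
    rw [Finset.sum_congr rfl fun k _ => hcross k]
    simp [hij]

theorem ae_tendsto_inv_smul_sum_conjTranspose_mul_self [DecidableEq n] [Countable n]
    (H : ℕ → Ω → Matrix m n ℂ) (hindep : iIndepFun H μ)
    (hident : ∀ k, IdentDistrib (H k) (H 0) μ μ)
    (hentindep : iIndepFun (fun (p : m × n) (ω : Ω) => H 0 ω p.1 p.2) μ)
    (hL2 : ∀ k i, MemLp (fun ω => H 0 ω k i) 2 μ)
    (hmean : ∀ k i, ∫ ω, H 0 ω k i ∂μ = 0)
    (hvar : ∀ k i, ∫ ω, ‖H 0 ω k i‖ ^ 2 ∂μ = 1) :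
    ∀ᵐ ω ∂μ, Tendsto (fun K : ℕ => (K : ℝ)⁻¹ • ∑ k ∈ Finset.range K, (H k ω)ᴴ * H k ω) atTop
      (𝓝 ((Fintype.card m : ℂ) • 1)) := by
  have hentry (i j : n) : ∀ᵐ ω ∂μ, Tendsto
      (fun K : ℕ => (K : ℝ)⁻¹ • ∑ k ∈ Finset.range K, ((H k ω)ᴴ * H k ω) i j) atTop
      (𝓝 (((Fintype.card m : ℂ) • (1 : Matrix n n ℂ)) i j)) := by
    have hgram : Measurable fun A : Matrix m n ℂ => (Aᴴ * A) i j := by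
      simp only [conjTranspose_mul_self_apply]
      fun_prop
    rw [← integral_conjTranspose_mul_self_apply hentindep hL2 hmean hvar i j]
    exact strong_law_ae _ (integrable_conjTranspose_mul_self_apply hL2 i j)
      (fun k l hkl => (hindep.comp _ fun _ => hgram).indepFun hkl) fun k => (hident k).comp hgram
  filter_upwards [ae_all_iff.2 fun i => ae_all_iff.2 (hentry i)] with ω hω
  refine tendsto_pi_nhds.2 fun i => tendsto_pi_nhds.2 fun j => ?_
  simpa [Matrix.sum_apply] using hω i j

end Gram

theorem broadcast_cut_asymptotic_general
    {Ω : Type*} [MeasurableSpace Ω] {μ : Measure Ω}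
    (M N : ℕ) (hM : 0 < M) (hN : 0 < N) (P : ℝ) (hP : 0 < P)
    (H : ℕ → Ω → Matrix (Fin N) (Fin M) ℂ)
    (hindep : iIndepFun H μ)
    (hident : ∀ k, IdentDistrib (H k) (H 0) μ μ)
    (hentindep : iIndepFun
      (fun (p : Fin N × Fin M) (ω : Ω) => H 0 ω p.1 p.2) μ)
    (hL2 : ∀ (i : Fin N) (j : Fin M), MemLp (fun ω => H 0 ω i j) 2 μ)
    (hmean : ∀ (i : Fin N) (j : Fin M), ∫ ω, H 0 ω i j ∂μ = 0)
    (hvar : ∀ (i : Fin N) (j : Fin M), ∫ ω, ‖H 0 ω i j‖ ^ 2 ∂μ = 1) :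
    ∀ᵐ ω ∂μ, Tendsto (fun K : ℕ =>
        Real.log (((1 : Matrix (Fin M) (Fin M) ℂ)
            + ((P / M : ℝ) : ℂ) • ∑ k ∈ Finset.range K, (H k ω)ᴴ * H k ω).det.re)
          - M * Real.log K)
      atTop (nhds (M * Real.log (P * N / M))) := by
  filter_upwards [ae_tendsto_inv_smul_sum_conjTranspose_mul_self H hindep hident hentindep hL2
    hmean hvar] with ω hω
  rw [Fintype.card_fin, ← Complex.ofReal_natCast] at hω
  have hcL : 0 < P / M * N := by positivity
  simpa only [Fintype.card_fin, div_mul_eq_mul_div] using tendsto_log_re_det_one_add_smul_sub hcL hω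

/-- **Asymptotic broadcast-cut bound.**  If `(H k)` is an i.i.d. sequence of random
`N × M` complex matrices whose common distribution has standardized independent entries
(mutually independent, mean zero, unit second moment, square integrable), then almost
surely `log det (I_M + (P/M) ∑_{k<K} Hₖᴴ Hₖ) - M log K → M log (P N / M)` as `K → ∞`. -/
theorem broadcast_cut_asymptotic
    {Ω : Type*} [MeasurableSpace Ω] {μ : Measure Ω} [IsProbabilityMeasure μ]
    (M N : ℕ) (hM : 0 < M) (hN : 0 < N) (P : ℝ) (hP : 0 < P)
    (H : ℕ → Ω → Matrix (Fin N) (Fin M) ℂ)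
    (hmeas : ∀ k, Measurable (H k))
    (hindep : iIndepFun H μ)
    (hident : ∀ k, IdentDistrib (H k) (H 0) μ μ)
    (hentindep : iIndepFun
      (fun (p : Fin N × Fin M) (ω : Ω) => H 0 ω p.1 p.2) μ)
    (hL2 : ∀ (i : Fin N) (j : Fin M), MemLp (fun ω => H 0 ω i j) 2 μ)
    (hmean : ∀ (i : Fin N) (j : Fin M), ∫ ω, H 0 ω i j ∂μ = 0)
    (hvar : ∀ (i : Fin N) (j : Fin M), ∫ ω, ‖H 0 ω i j‖ ^ 2 ∂μ = 1) :
    ∀ᵐ ω ∂μ, Tendsto (fun K : ℕ =>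
        Real.log (((1 : Matrix (Fin M) (Fin M) ℂ)
            + ((P / M : ℝ) : ℂ) • ∑ k ∈ Finset.range K, (H k ω)ᴴ * H k ω).det.re)
          - M * Real.log K)
      atTop (nhds (M * Real.log (P * N / M))) :=
  broadcast_cut_asymptotic_general M N hM hN P hP H hindep hident hentindep hL2 hmean hvar
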